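/- arXiv:1010.2807 — 3 statements merged into one kernel-verified Lean document; each statement's English description precedes it below -/
import Mathlib

section
/- Let L = L₁ ⊕ L₂ be a direct sum of Lie algebras over a field F of characteristic 0, where L₁ has trivial center. Let δ ∈ F with δ ≠ 0, and let φ be a δ-derivation of L. Then φ maps L₂ into L₂ (identifying L₁ and L₂ with the corresponding ideals of L). -/
/-- The direct sum (product) of two Lie rings, with componentwise bracket. -/
instance prodLieRing {L₁ L₂ : Type*} [LieRing L₁] [LieRing L₂] : LieRing (L₁ × L₂) where
  bracket x y := (⁅x.1, y.1⁆, ⁅x.2, y.2⁆)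
  add_lie x y z := Prod.ext (add_lie _ _ _) (add_lie _ _ _)
  lie_add x y z := Prod.ext (lie_add _ _ _) (lie_add _ _ _)
  lie_self x := Prod.ext (lie_self _) (lie_self _)
  leibniz_lie x y z := Prod.ext (leibniz_lie _ _ _) (leibniz_lie _ _ _)

instance prodLieAlgebra {F L₁ L₂ : Type*} [CommRing F] [LieRing L₁] [LieAlgebra F L₁]
    [LieRing L₂] [LieAlgebra F L₂] : LieAlgebra F (L₁ × L₂) where
  lie_smul t x y := Prod.ext (lie_smul _ _ _) (lie_smul _ _ _)

def IsDeltaDerivation {F L : Type*} [Field F] [LieRing L] [LieAlgebra F L]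
    (δ : F) (φ : L →ₗ[F] L) : Prop :=
  ∀ x y : L, φ ⁅x, y⁆ = δ • (⁅φ x, y⁆ + ⁅x, φ y⁆)

/-- If `L = L₁ × L₂` with `Z(L₁) = 0`, `char F = 0`, `δ ≠ 0`, then any `δ`-derivation of `L`
maps `L₂` into `L₂`. -/
theorem delta_derivation_preserves_second_factor {F L₁ L₂ : Type*} [Field F] [CharZero F]
    [LieRing L₁] [LieAlgebra F L₁] [LieRing L₂] [LieAlgebra F L₂]
    (hcenter : LieAlgebra.center F L₁ = ⊥)
    (δ : F) (hδ : δ ≠ 0) (φ : (L₁ × L₂) →ₗ[F] (L₁ × L₂))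
    (hφ : IsDeltaDerivation δ φ) :
    ∀ x₂ : L₂, (φ ((0 : L₁), x₂)).1 = 0 := by
  intro x₂
  set a := (φ ((0 : L₁), x₂)).1 with ha
  have key : ∀ y₁ : L₁, ⁅a, y₁⁆ = 0 := by
    intro y₁
    have h := hφ ((0 : L₁), x₂) (y₁, (0 : L₂))
    have hbr : (⁅((0 : L₁), x₂), (y₁, (0 : L₂))⁆ : L₁ × L₂) = 0 := by
      show ((⁅(0 : L₁), y₁⁆, ⁅x₂, (0 : L₂)⁆) : L₁ × L₂) = 0
      simp
    rw [hbr, map_zero] at h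
    have h1 := congrArg Prod.fst h.symm
    simp only [Prod.fst_zero, Prod.smul_fst, Prod.fst_add] at h1
    have h2 : (⁅φ ((0 : L₁), x₂), (y₁, (0 : L₂))⁆ : L₁ × L₂).1
        + (⁅((0 : L₁), x₂), φ (y₁, (0 : L₂))⁆ : L₁ × L₂).1 = 0 := by
      exact (smul_eq_zero.mp h1).resolve_left hδ
    have e1 : (⁅φ ((0 : L₁), x₂), (y₁, (0 : L₂))⁆ : L₁ × L₂).1 = ⁅a, y₁⁆ := rfl
    have e2 : (⁅((0 : L₁), x₂), φ (y₁, (0 : L₂))⁆ : L₁ × L₂).1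
        = ⁅(0 : L₁), (φ (y₁, (0 : L₂))).1⁆ := rfl
    rw [e1, e2, zero_lie, add_zero] at h2
    exact h2
  have hmem : a ∈ LieAlgebra.center F L₁ := by
    intro y₁
    have := key y₁
    rw [← lie_skew] at this
    simpa using neg_eq_zero.mp (by simpa using this)
  rw [hcenter] at hmem
  simpa using hmem
end

section
/- Let L = L₁ ⊕ L₂ be a direct sum of Lie algebras over a field F of characteristic 0, with the center of L₂ zero, let δ ≠ 0, and let φ be a δ-derivation of L. Then φ maps L₁ into L₁. -/
/-- If `L = L₁ × L₂` with `Z(L₂) = 0`, `char F = 0`, `δ ≠ 0`, then any `δ`-derivation of `L`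
maps `L₁` into `L₁`. -/
theorem delta_derivation_preserves_first_factor {F L₁ L₂ : Type*} [Field F] [CharZero F]
    [LieRing L₁] [LieAlgebra F L₁] [LieRing L₂] [LieAlgebra F L₂]
    (hcenter : LieAlgebra.center F L₂ = ⊥)
    (δ : F) (hδ : δ ≠ 0) (φ : (L₁ × L₂) →ₗ[F] (L₁ × L₂))
    (hφ : IsDeltaDerivation δ φ) :
    ∀ x₁ : L₁, (φ (x₁, (0 : L₂))).2 = 0 := by
  intro x₁
  set b := (φ (x₁, (0 : L₂))).2 with hb
  have key : ∀ y : L₂, ⁅y, b⁆ = 0 := by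
    intro y
    have h := hφ (x₁, 0) ((0 : L₁), y)
    have hz : (⁅((x₁ : L₁), (0:L₂)), ((0:L₁), y)⁆ : L₁ × L₂) = 0 := by
      show ((⁅x₁, (0:L₁)⁆, ⁅(0:L₂), y⁆) : L₁ × L₂) = 0
      simp
    rw [hz, map_zero] at h
    have h2 := congrArg Prod.snd h.symm
    have hsum : δ • (⁅b, y⁆ + ⁅(0 : L₂), (φ ((0:L₁), y)).2⁆) = 0 := by
      exact h2
    rw [zero_lie, add_zero, smul_eq_zero] at hsum
    rcases hsum with h' | h'
    · exact absurd h' hδ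
    · rw [← lie_skew, h', neg_zero]
  have hmem : b ∈ LieAlgebra.center F L₂ := key
  rw [hcenter] at hmem
  simpa using hmem
end

section
/- Let F be an algebraically closed field of characteristic 0 and let φ be a (1/2)-derivation of sl₂(F). Then φ is a scalar map: there exists α ∈ F with φ(x) = α x for all x ∈ sl₂(F). -/
open LieAlgebra.SpecialLinear

open Matrix

section
set_option linter.unusedSectionVars false
variable {F : Type*} [Field F] [CharZero F]

lemma mem_sl2 (A : Matrix (Fin 2) (Fin 2) F) (h : A 1 1 = - A 0 0) : A ∈ sl (Fin 2) F :=
  LinearMap.mem_ker.2 (by simp [Matrix.trace_fin_two, h])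

noncomputable def Ee : sl (Fin 2) F := ⟨!![0,1;0,0], mem_sl2 _ (by simp)⟩
noncomputable def Ff : sl (Fin 2) F := ⟨!![0,0;1,0], mem_sl2 _ (by simp)⟩
noncomputable def Hh : sl (Fin 2) F := ⟨!![1,0;0,-1], mem_sl2 _ (by simp)⟩

@[simp] lemma Ee_val : (Ee : sl (Fin 2) F).val = !![0,1;0,0] := rfl
@[simp] lemma Ff_val : (Ff : sl (Fin 2) F).val = !![0,0;1,0] := rfl
@[simp] lemma Hh_val : (Hh : sl (Fin 2) F).val = !![1,0;0,-1] := rfl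
@[simp] lemma val_smul (c : F) (x : sl (Fin 2) F) :
    ((c • x : sl (Fin 2) F) : Matrix (Fin 2) (Fin 2) F) = c • x.val := rfl
@[simp] lemma val_add (x y : sl (Fin 2) F) :
    ((x + y : sl (Fin 2) F) : Matrix (Fin 2) (Fin 2) F) = x.val + y.val := rfl

lemma sl2_trace (x : sl (Fin 2) F) : x.val 1 1 = - x.val 0 0 := by
  have h := LinearMap.mem_ker.1 x.2
  rw [Matrix.traceLinearMap_apply, Matrix.trace_fin_two] at h
  exact eq_neg_of_add_eq_zero_right h

lemma sl2_span (x : sl (Fin 2) F) : x = x.val 0 1 • Ee + x.val 1 0 • Ff + x.val 0 0 • Hh := by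
  apply Subtype.ext
  simp only [val_add, val_smul, Ee_val, Ff_val, Hh_val]
  ext i j; fin_cases i <;> fin_cases j <;> simp [sl2_trace x, mul_comm]

lemma brHE : ⁅(Hh : sl (Fin 2) F), (Ee : sl (Fin 2) F)⁆ = (2:F) • Ee := by
  apply Subtype.ext
  rw [sl_bracket, val_smul]
  ext i j; fin_cases i <;> fin_cases j <;>
    simp [Matrix.mul_apply, Fin.sum_univ_two, two_mul]; try ring

lemma brHF : ⁅(Hh : sl (Fin 2) F), (Ff : sl (Fin 2) F)⁆ = (-2:F) • Ff := by
  apply Subtype.ext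
  rw [sl_bracket, val_smul]
  ext i j; fin_cases i <;> fin_cases j <;>
    simp [Matrix.mul_apply, Fin.sum_univ_two, two_mul]; ring

lemma brEF : ⁅(Ee : sl (Fin 2) F), (Ff : sl (Fin 2) F)⁆ = Hh := by
  apply Subtype.ext
  rw [sl_bracket]
  ext i j; fin_cases i <;> fin_cases j <;>
    simp [Matrix.mul_apply, Fin.sum_univ_two]

end

/-- Over an algebraically closed field of characteristic 0, every `(1/2)`-derivation of
`sl₂(F)` is a scalar map. -/
theorem sl2_half_derivation_is_scalar {F : Type*} [Field F] [IsAlgClosed F] [CharZero F]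
    (φ : sl (Fin 2) F →ₗ[F] sl (Fin 2) F)
    (hφ : IsDeltaDerivation ((1 : F) / 2) φ) :
    ∃ α : F, ∀ x : sl (Fin 2) F, φ x = α • x := by
  have e1 := hφ Hh Ee
  rw [brHE, LinearMap.map_smul] at e1
  have e2 := hφ Hh Ff
  rw [brHF, LinearMap.map_smul] at e2
  have e3 := hφ Ee Ff
  rw [brEF] at e3
  have v1 := congrArg Subtype.val e1
  have v2 := congrArg Subtype.val e2
  have v3 := congrArg Subtype.val e3
  simp only [val_smul, val_add, sl_bracket] at v1 v2 v3
  -- entry equations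
  have q11 := sl2_trace (φ Hh)
  have p11 := sl2_trace (φ Ee)
  have r11 := sl2_trace (φ Ff)
  have A1 := congrFun (congrFun v1 0) 0
  have A2 := congrFun (congrFun v1 0) 1
  have A3 := congrFun (congrFun v1 1) 0
  have B1 := congrFun (congrFun v2 0) 0
  have B2 := congrFun (congrFun v2 0) 1
  have B3 := congrFun (congrFun v2 1) 0
  have C1 := congrFun (congrFun v3 0) 0
  have C2 := congrFun (congrFun v3 0) 1
  have C3 := congrFun (congrFun v3 1) 0
  simp [Matrix.mul_apply, Matrix.vecMul, dotProduct, Fin.sum_univ_two, q11, p11, r11] at A1 A2 A3 B1 B2 B3 C1 C2 C3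
  -- solve the linear system
  have hp1 : (φ Ee).val 1 0 = 0 := by linear_combination (1/3 : F) * A3
  have hf1 : (φ Ff).val 0 1 = 0 := by linear_combination (-1/3 : F) * B2
  have hp0 : (φ Ee).val 0 0 = 0 := by linear_combination (2/3 : F) * A1 - (1/3 : F) * C3
  have hq2 : (φ Hh).val 1 0 = 0 := by linear_combination C3 - hp0
  have hf0 : (φ Ff).val 0 0 = 0 := by linear_combination (-2/3 : F) * B1 - (1/3 : F) * C2
  have hq1 : (φ Hh).val 0 1 = 0 := by linear_combination C2 - hf0
  have ha : (φ Ee).val 0 1 = (φ Hh).val 0 0 := by linear_combination A2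
  have hf2 : (φ Ff).val 1 0 = (φ Hh).val 0 0 := by linear_combination (-1 : F) * B3
  set α := (φ Hh).val 0 0 with hα
  refine ⟨α, ?_⟩
  have hE : φ Ee = α • Ee := by
    apply Subtype.ext
    rw [val_smul, Ee_val]
    ext i j; fin_cases i <;> fin_cases j <;>
      simp [hp0, hp1, ha, p11]
  have hF : φ Ff = α • Ff := by
    apply Subtype.ext
    rw [val_smul, Ff_val]
    ext i j; fin_cases i <;> fin_cases j <;>
      simp [hf0, hf1, hf2, r11]
  have hH : φ Hh = α • Hh := by
    apply Subtype.ext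
    rw [val_smul, Hh_val]
    ext i j; fin_cases i <;> fin_cases j <;>
      simp [hq1, hq2, q11, ← hα]
  intro x
  have hx := sl2_span x
  rw [hx, map_add, map_add, LinearMap.map_smul, LinearMap.map_smul, LinearMap.map_smul,
    hE, hF, hH]
  module
end
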